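/- If H is a connected graph of order at least 4, then the Cartesian product K₃ □ H is not well-dominated. -/

import Mathlib

open SimpleGraph

variable {V : Type*}

/-- Closed neighborhood of a vertex. -/
def closedNbhd (G : SimpleGraph V) (v : V) : Set V := insert v (G.neighborSet v)

/-- Closed neighborhood of a set of vertices. -/
def closedNbhdSet (G : SimpleGraph V) (A : Set V) : Set V := ⋃ a ∈ A, closedNbhd G a

/-- `D` is a dominating set of `G`. -/
def IsDomSet (G : SimpleGraph V) (D : Set V) : Prop :=
  ∀ v, ∃ u ∈ D, v ∈ closedNbhd G u

/-- `D` is a minimal dominating set of `G`. -/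
def IsMinimalDomSet (G : SimpleGraph V) (D : Set V) : Prop :=
  IsDomSet G D ∧ ∀ D' ⊆ D, IsDomSet G D' → D' = D

/-- The domination number `γ`. -/
noncomputable def domNum (G : SimpleGraph V) : ℕ :=
  sInf {n | ∃ D : Set V, IsDomSet G D ∧ D.ncard = n}

/-- The upper domination number `Γ`. -/
noncomputable def upperDomNum (G : SimpleGraph V) : ℕ :=
  sSup {n | ∃ D : Set V, IsMinimalDomSet G D ∧ D.ncard = n}

/-- A graph is well-dominated if `γ = Γ`. -/
def WellDominated (G : SimpleGraph V) : Prop := domNum G = upperDomNum G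

/-- `A` is an independent set of `G`. -/
def IsIndep (G : SimpleGraph V) (A : Set V) : Prop :=
  ∀ u ∈ A, ∀ v ∈ A, ¬ G.Adj u v

/-- `A` is a maximal independent set of `G`. -/
def IsMaxIndep (G : SimpleGraph V) (A : Set V) : Prop :=
  IsIndep G A ∧ ∀ B, IsIndep G B → A ⊆ B → B = A

/-- The independence number `α`. -/
noncomputable def indepNum (G : SimpleGraph V) : ℕ :=
  sSup {n | ∃ A : Set V, IsIndep G A ∧ A.ncard = n}

/-- The strong product of two graphs. -/
def strongProd {α β : Type*} (G : SimpleGraph α) (H : SimpleGraph β) :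
    SimpleGraph (α × β) where
  Adj x y := x ≠ y ∧ (x.1 = y.1 ∨ G.Adj x.1 y.1) ∧ (x.2 = y.2 ∨ H.Adj x.2 y.2)
  symm := by
    constructor
    rintro x y ⟨h1, h2, h3⟩
    refine ⟨h1.symm, ?_, ?_⟩
    · cases h2 with
      | inl h => exact Or.inl h.symm
      | inr h => exact Or.inr h.symm
    · cases h3 with
      | inl h => exact Or.inl h.symm
      | inr h => exact Or.inr h.symm
  loopless := by constructor; rintro x ⟨h1, _⟩; exact h1 rfl

/-- The direct (tensor) product of two graphs. -/
def tensorProd {α β : Type*} (G : SimpleGraph α) (H : SimpleGraph β) :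
    SimpleGraph (α × β) where
  Adj x y := G.Adj x.1 y.1 ∧ H.Adj x.2 y.2
  symm := ⟨fun _ _ h => ⟨h.1.symm, h.2.symm⟩⟩
  loopless := ⟨fun _ h => G.irrefl h.1⟩

/-- The corona `G ⊙ K₁`. -/
def corona {α : Type*} (G : SimpleGraph α) : SimpleGraph (α ⊕ α) :=
  SimpleGraph.fromRel (fun x y =>
    match x, y with
    | Sum.inl u, Sum.inl v => G.Adj u v
    | Sum.inl u, Sum.inr v => u = v
    | _, _ => False)

/-- The private neighborhood `pn[u,D] = N[u] - N[D - {u}]`. -/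
def privateNbhd (G : SimpleGraph V) (D : Set V) (u : V) : Set V :=
  {x | x ∈ closedNbhd G u ∧ ∀ d ∈ D, d ≠ u → x ∉ closedNbhd G d}

/-- A set `D` is open irredundant if every vertex of `D` has an external
private neighbor. -/
def IsOpenIrred (G : SimpleGraph V) (D : Set V) : Prop :=
  ∀ u ∈ D, ∃ x ∈ G.neighborSet u, ∀ d ∈ D, d ≠ u → x ∉ closedNbhd G d


/-!
The row `{0} × V(H)` is a minimal dominating set of `K₃ □ H` with `n = |H|` vertices, so it suffices
to find a dominating set with fewer than `n` vertices or a minimal one with more.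
If some vertex `b` has three vertices `T ⊆ N[b]` such that each `t ∈ T` other than `b` has a
neighbour outside `T`, then trading the row over `T` for the two other vertices of the column over
`b` leaves a dominating set of size `n - 1`. A connected graph on at least four vertices without
such a configuration has maximum degree at most `2` and no path `a b c` whose ends both have
neighbours outside `{a, b, c}`; it is therefore the path `a b c d`, and the columns over `b` and `c`
form a minimal dominating set of size `6 > 4`, because `a` and `d` are private neighbours of `b`
and `c`.
-/

section

variable {W : Type*}

lemma mem_closedNbhd_iff {G : SimpleGraph V} {u v : V} :
    v ∈ closedNbhd G u ↔ v = u ∨ G.Adj u v := Iff.rfl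

lemma mem_closedNbhd_boxProd {G : SimpleGraph V} {H : SimpleGraph W} {x y : V × W} :
    y ∈ closedNbhd (G □ H) x ↔
      (y.1 = x.1 ∧ y.2 ∈ closedNbhd H x.2) ∨ (y.2 = x.2 ∧ G.Adj x.1 y.1) := by
  obtain ⟨i, v⟩ := x
  obtain ⟨j, w⟩ := y
  simp only [mem_closedNbhd_iff, boxProd_adj, Prod.mk.injEq]
  grind [SimpleGraph.Adj.ne]

lemma not_wellDominated_of_ncard_lt [Finite V] {G : SimpleGraph V} {D₁ D₂ : Set V}
    (h₁ : IsDomSet G D₁) (h₂ : IsMinimalDomSet G D₂) (hlt : D₁.ncard < D₂.ncard) :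
    ¬ WellDominated G := by
  have hγ : domNum G ≤ D₁.ncard := Nat.sInf_le ⟨D₁, h₁, rfl⟩
  have hΓ : D₂.ncard ≤ upperDomNum G :=
    le_csSup ⟨Nat.card V, by rintro _ ⟨D, -, rfl⟩; exact Set.ncard_le_card D⟩ ⟨D₂, h₂, rfl⟩
  unfold WellDominated
  omega

lemma isDomSet_preimage_iff {G : SimpleGraph V} {G' : SimpleGraph W} (e : G ≃g G')
    {D : Set W} : IsDomSet G (e ⁻¹' D) ↔ IsDomSet G' D := by
  have hN : ∀ u v, e v ∈ closedNbhd G' (e u) ↔ v ∈ closedNbhd G u := fun u v => by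
    rw [mem_closedNbhd_iff, mem_closedNbhd_iff, e.map_adj_iff, e.injective.eq_iff]
  constructor
  · intro h w
    obtain ⟨u, hu, hw⟩ := h (e.symm w)
    exact ⟨e u, hu, by simpa using (hN u (e.symm w)).2 hw⟩
  · intro h v
    obtain ⟨w, hw, hv⟩ := h (e v)
    exact ⟨e.symm w, by simpa using hw, (hN _ v).1 (by simpa using hv)⟩

lemma IsMinimalDomSet.preimage_iso {G : SimpleGraph V} {G' : SimpleGraph W} (e : G ≃g G')
    {D : Set W} (h : IsMinimalDomSet G' D) : IsMinimalDomSet G (e ⁻¹' D) := by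
  refine ⟨(isDomSet_preimage_iff e).2 h.1, fun D' hsub hD' => ?_⟩
  have hD'' : e ⁻¹' (e.symm ⁻¹' D') = D' := by ext; simp
  have heq : e.symm ⁻¹' D' = D := by
    refine h.2 _ (fun w hw => by simpa using hsub hw) ?_
    rwa [← isDomSet_preimage_iff e, hD'']
  rw [← heq, hD'']

lemma isMinimalDomSet_univ_prod (G : SimpleGraph V) {H : SimpleGraph W} {S : Set W}
    (hdom : IsDomSet H S) (hirr : IsOpenIrred H S) :
    IsMinimalDomSet (G □ H) (Set.univ ×ˢ S) := by
  refine ⟨fun ⟨i, w⟩ => ?_, fun D hsub hD => hsub.antisymm fun ⟨i, s⟩ ⟨_, hs⟩ => ?_⟩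
  · obtain ⟨s, hs, hw⟩ := hdom w
    exact ⟨(i, s), ⟨trivial, hs⟩, mem_closedNbhd_boxProd.2 (Or.inl ⟨rfl, hw⟩)⟩
  · -- `(i, a)` for a private neighbour `a` of `s` is dominated by `(i, s)` alone
    obtain ⟨a, has, hpriv⟩ := hirr s hs
    obtain ⟨⟨j, t⟩, htD, hcov⟩ := hD (i, a)
    rw [mem_closedNbhd_boxProd] at hcov
    have hts : t = s := by
      by_contra hts
      refine hpriv t (hsub htD).2 hts ?_
      rcases hcov with ⟨-, h⟩ | ⟨h, -⟩
      exacts [h, Or.inl h]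
    subst hts
    rcases hcov with ⟨rfl, -⟩ | ⟨h, -⟩
    exacts [htD, absurd h (H.ne_of_adj has).symm]

lemma isDomSet_top_singleton [Nontrivial V] (i : V) : IsDomSet (⊤ : SimpleGraph V) {i} :=
  fun v => ⟨i, rfl, (eq_or_ne v i).imp id fun h => (top_adj _ _).2 h.symm⟩

lemma isOpenIrred_top_singleton [Nontrivial V] (i : V) :
    IsOpenIrred (⊤ : SimpleGraph V) {i} := by
  intro u hu
  obtain ⟨j, hj⟩ := exists_ne u
  exact ⟨j, (top_adj _ _).2 hj.symm, fun d hd hdu => absurd (hd.trans hu.symm) hdu⟩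

lemma isMinimalDomSet_singleton_prod_univ [Nontrivial V] (i : V) (H : SimpleGraph W) :
    IsMinimalDomSet ((⊤ : SimpleGraph V) □ H) ({i} ×ˢ Set.univ) := by
  have h := (isMinimalDomSet_univ_prod H (isDomSet_top_singleton i)
    (isOpenIrred_top_singleton i)).preimage_iso (boxProdComm ⊤ H)
  convert h using 1
  ext ⟨j, w⟩
  exact and_comm

lemma ncard_singleton_prod_univ [Fintype W] (i : V) :
    (({i} : Set V) ×ˢ (Set.univ : Set W)).ncard = Fintype.card W := by
  rw [Set.ncard_prod, Set.ncard_singleton, Set.ncard_univ, Nat.card_eq_fintype_card, one_mul]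

lemma not_wellDominated_of_isOpenIrred [Fintype V] [Nontrivial V] [Fintype W]
    {H : SimpleGraph W} {S : Set W} (hdom : IsDomSet H S) (hirr : IsOpenIrred H S)
    (hlt : Fintype.card W < Fintype.card V * S.ncard) :
    ¬ WellDominated ((⊤ : SimpleGraph V) □ H) := by
  obtain ⟨i⟩ := ‹Nontrivial V›.to_nonempty
  refine not_wellDominated_of_ncard_lt (isMinimalDomSet_singleton_prod_univ i H).1
    (isMinimalDomSet_univ_prod ⊤ hdom hirr) ?_
  rwa [ncard_singleton_prod_univ, Set.ncard_prod, Set.ncard_univ, Nat.card_eq_fintype_card]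

/-- If this holds, the row of `K_m □ H` over `T` can be traded for the other `m - 1` vertices of
the column over `b`, which shrinks a dominating set as soon as `m ≤ |T|`. -/
def IsExchangeable (H : SimpleGraph W) (b : W) (T : Finset W) : Prop :=
  (∀ t ∈ T, t ∈ closedNbhd H b) ∧ ∀ t ∈ T, t ≠ b → ∃ u ∉ T, H.Adj t u

lemma not_wellDominated_of_isExchangeable [Fintype V] [Nontrivial V] [DecidableEq V]
    [Fintype W] [DecidableEq W] {H : SimpleGraph W} {b : W} {T : Finset W}
    (hT : IsExchangeable H b T) (hcard : Fintype.card V ≤ T.card) :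
    ¬ WellDominated ((⊤ : SimpleGraph V) □ H) := by
  obtain ⟨i⟩ := ‹Nontrivial V›.to_nonempty
  set D : Finset (V × W) := {i} ×ˢ Tᶜ ∪ {i}ᶜ ×ˢ {b}
  have hdom : IsDomSet ((⊤ : SimpleGraph V) □ H) D := by
    rintro ⟨j, w⟩
    by_cases hw : w ∈ T
    swap
    · refine ⟨(i, w), by simp [D, hw], mem_closedNbhd_boxProd.2 ?_⟩
      obtain rfl | hji := eq_or_ne j i
      exacts [Or.inl ⟨rfl, Or.inl rfl⟩, Or.inr ⟨rfl, (top_adj _ _).2 hji.symm⟩]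
    obtain hji | rfl := ne_or_eq j i
    · exact ⟨(j, b), by simp [D, hji], mem_closedNbhd_boxProd.2 (Or.inl ⟨rfl, hT.1 w hw⟩)⟩
    obtain hwb | rfl := ne_or_eq w b
    · obtain ⟨u, hu, hwu⟩ := hT.2 w hw hwb
      exact ⟨(j, u), by simp [D, hu], mem_closedNbhd_boxProd.2 (Or.inl ⟨rfl, Or.inr hwu.symm⟩)⟩
    · obtain ⟨k, hk⟩ := exists_ne j
      exact ⟨(k, w), by simp [D, hk], mem_closedNbhd_boxProd.2 (Or.inr ⟨rfl, (top_adj _ _).2 hk⟩)⟩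
  have hD : D.card < Fintype.card W := by
    have := T.card_le_univ
    have := Fintype.card_pos (α := V)
    calc D.card ≤ (Fintype.card W - T.card) + (Fintype.card V - 1) := by
          refine (Finset.card_union_le _ _).trans_eq ?_
          simp [Finset.card_compl]
      _ < Fintype.card W := by omega
  refine not_wellDominated_of_ncard_lt hdom (isMinimalDomSet_singleton_prod_univ i H) ?_
  rwa [Set.ncard_coe_finset, ncard_singleton_prod_univ]

lemma isOpenIrred_pair {H : SimpleGraph W} {a b c d : W} (hab : H.Adj a b) (hcd : H.Adj c d)
    (hac : a ∉ closedNbhd H c) (hdb : d ∉ closedNbhd H b) : IsOpenIrred H {b, c} := by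
  rintro u (rfl | rfl)
  · exact ⟨a, hab.symm, by rintro _ (rfl | rfl) hne; exacts [absurd rfl hne, hac]⟩
  · exact ⟨d, hcd, by rintro _ (rfl | rfl) hne; exacts [hdb, absurd rfl hne]⟩

lemma not_wellDominated_of_forall_mem_four [Fintype V] [Fintype W] [DecidableEq W]
    {H : SimpleGraph W} {a b c d : W} (hab : H.Adj a b) (hcd : H.Adj c d)
    (hac : a ∉ closedNbhd H c) (hdb : d ∉ closedNbhd H b) (hV : ∀ v, v ∈ ({a, b, c, d} : Finset W))
    (hV3 : 3 ≤ Fintype.card V) : ¬ WellDominated ((⊤ : SimpleGraph V) □ H) := by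
  have : Nontrivial V := Fintype.one_lt_card_iff_nontrivial.1 (by omega)
  have hbc : b ≠ c := by rintro rfl; exact hac (Or.inr hab.symm)
  refine not_wellDominated_of_isOpenIrred (S := {b, c}) (fun v => ?_)
    (isOpenIrred_pair hab hcd hac hdb) ?_
  · have hv := hV v
    simp only [Finset.mem_insert, Finset.mem_singleton] at hv
    rcases hv with rfl | rfl | rfl | rfl
    · exact ⟨b, Or.inl rfl, Or.inr hab.symm⟩
    · exact ⟨v, Or.inl rfl, Or.inl rfl⟩
    · exact ⟨v, Or.inr rfl, Or.inl rfl⟩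
    · exact ⟨c, Or.inr rfl, Or.inr hcd⟩
  · have hW : Fintype.card W ≤ 4 :=
      (Finset.card_le_card fun v _ => hV v).trans Finset.card_le_four
    rw [Set.ncard_pair hbc]
    omega

theorem SimpleGraph.Connected.mem_of_forall_adj_mem {H : SimpleGraph W} (hH : H.Connected)
    {S : Set W} {u : W} (hu : u ∈ S) (hS : ∀ x ∈ S, ∀ y, H.Adj x y → y ∈ S) (v : W) : v ∈ S := by
  by_contra hv
  obtain ⟨d, -, hd₁, hd₂⟩ := (hH.preconnected u v).some.exists_boundary_dart S hu hv
  exact hd₂ (hS _ hd₁ _ d.adj)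

theorem SimpleGraph.Connected.exists_adj_notMem_of_card_lt [Fintype W] {H : SimpleGraph W}
    (hH : H.Connected) {S : Finset W} (hS : S.Nonempty) (hcard : S.card < Fintype.card W) :
    ∃ x ∈ S, ∃ y ∉ S, H.Adj x y := by
  obtain ⟨u, hu⟩ := hS
  obtain ⟨v, -, hv⟩ := Finset.exists_mem_notMem_of_card_lt_card (t := Finset.univ) hcard
  by_contra! hclosed
  exact hv (hH.mem_of_forall_adj_mem (S := ↑S) hu
    (fun x hx y hxy => by_contra fun hy => hclosed x hx y hy hxy) v)

theorem SimpleGraph.Connected.exists_adj_adj_ne [Fintype W] [DecidableEq W] {H : SimpleGraph W}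
    (hH : H.Connected) (h3 : 3 ≤ Fintype.card W) : ∃ b a c, H.Adj b a ∧ H.Adj b c ∧ a ≠ c := by
  have : Nontrivial W := Fintype.one_lt_card_iff_nontrivial.1 (by omega)
  obtain ⟨u⟩ := ‹Nontrivial W›.to_nonempty
  obtain ⟨v, huv⟩ := hH.preconnected.exists_adj_of_nontrivial u
  obtain ⟨x, hx, y, hy, hxy⟩ := hH.exists_adj_notMem_of_card_lt (S := {u, v}) ⟨u, by simp⟩
    (Finset.card_le_two.trans_lt (by omega))
  simp only [Finset.mem_insert, Finset.mem_singleton, not_or] at hx hy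
  rcases hx with rfl | rfl
  · exact ⟨x, v, y, huv, hxy, Ne.symm hy.2⟩
  · exact ⟨x, u, y, huv.symm, hxy, Ne.symm hy.1⟩

theorem SimpleGraph.Connected.exists_path_four [Fintype W] [DecidableEq W] {H : SimpleGraph W}
    (hH : H.Connected) (h4 : 4 ≤ Fintype.card W)
    (hdeg : ∀ {b p q r}, H.Adj b p → H.Adj b q → H.Adj b r → p ≠ q → r = p ∨ r = q) :
    ∃ a b c d, H.Adj a b ∧ H.Adj b c ∧ H.Adj c d ∧ a ≠ c ∧ b ≠ d ∧ a ≠ d := by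
  obtain ⟨b, a, c, hba, hbc, hac⟩ := hH.exists_adj_adj_ne (by omega)
  obtain ⟨x, hx, y, hy, hxy⟩ := hH.exists_adj_notMem_of_card_lt (S := {a, b, c}) ⟨a, by simp⟩
    (Finset.card_le_three.trans_lt (by omega))
  simp only [Finset.mem_insert, Finset.mem_singleton, not_or] at hx hy
  rcases hx with rfl | rfl | rfl
  · exact ⟨c, b, x, y, hbc.symm, hba, hxy, Ne.symm hac, Ne.symm hy.2.1, Ne.symm hy.2.2⟩
  · exact ((hdeg hba hbc hxy hac).elim hy.1 hy.2.2).elim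
  · exact ⟨a, b, x, y, hba.symm, hbc, hxy, hac, Ne.symm hy.2.1, Ne.symm hy.1⟩

def ExchangeFree (H : SimpleGraph W) : Prop :=
  ∀ b (T : Finset W), 3 ≤ T.card → ¬ IsExchangeable H b T

namespace ExchangeFree

variable [DecidableEq W] {H : SimpleGraph W}

theorem adj_eq_or_eq (hfree : ExchangeFree H) {b p q r : W} (hp : H.Adj b p) (hq : H.Adj b q)
    (hr : H.Adj b r) (hpq : p ≠ q) : r = p ∨ r = q := by
  by_contra! hr'
  have hT : ∀ t ∈ ({p, q, r} : Finset W), H.Adj b t := by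
    simp only [Finset.mem_insert, Finset.mem_singleton]
    rintro t (rfl | rfl | rfl) <;> assumption
  exact hfree b {p, q, r} (Finset.card_eq_three.2 ⟨p, q, r, hpq, hr'.1.symm, hr'.2.symm, rfl⟩).ge
    ⟨fun t ht => Or.inr (hT t ht), fun t ht _ => ⟨b, by simp [hp.ne, hq.ne, hr.ne], (hT t ht).symm⟩⟩

theorem adj_eq_or_eq_of_adj (hfree : ExchangeFree H) {a b c d x : W} (hba : H.Adj b a)
    (hbc : H.Adj b c) (hac : a ≠ c) (hcd : H.Adj c d) (hda : d ≠ a) (hdb : d ≠ b)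
    (hax : H.Adj a x) : x = b ∨ x = c := by
  by_contra! hx
  refine hfree b {a, b, c}
    (Finset.card_eq_three.2 ⟨a, b, c, hba.ne.symm, hac, hbc.ne, rfl⟩).ge ⟨?_, ?_⟩
  · simp only [Finset.mem_insert, Finset.mem_singleton]
    rintro t (rfl | rfl | rfl)
    exacts [Or.inr hba, Or.inl rfl, Or.inr hbc]
  · simp only [Finset.mem_insert, Finset.mem_singleton]
    rintro t (rfl | rfl | rfl) htb
    · exact ⟨x, by simp [hax.ne.symm, hx.1, hx.2], hax⟩
    · exact absurd rfl htb
    · exact ⟨d, by simp [hda, hdb, hcd.ne.symm], hcd⟩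

theorem exists_spanning_path_four [Fintype W] (hfree : ExchangeFree H) (hH : H.Connected)
    (h4 : 4 ≤ Fintype.card W) :
    ∃ a b c d, H.Adj a b ∧ H.Adj c d ∧ a ∉ closedNbhd H c ∧ d ∉ closedNbhd H b ∧
      ∀ v, v ∈ ({a, b, c, d} : Finset W) := by
  obtain ⟨a, b, c, d, hab, hbc, hcd, hac, hbd, had⟩ := hH.exists_path_four h4 hfree.adj_eq_or_eq
  have hNb : ∀ x, H.Adj b x → x = a ∨ x = c := fun x hx => hfree.adj_eq_or_eq hab.symm hbc hx hac
  have hNc : ∀ x, H.Adj c x → x = b ∨ x = d := fun x hx => hfree.adj_eq_or_eq hbc.symm hcd hx hbd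
  have hca : ¬ H.Adj c a := fun h => (hNc a h).elim hab.ne had
  have hbd' : ¬ H.Adj b d := fun h => (hNb d h).elim (Ne.symm had) hcd.ne.symm
  have hNa : ∀ x, H.Adj a x → x = b := fun x hx =>
    (hfree.adj_eq_or_eq_of_adj hab.symm hbc hac hcd (Ne.symm had) hbd.symm hx).resolve_right
      (by rintro rfl; exact hca hx.symm)
  have hNd : ∀ x, H.Adj d x → x = c := fun x hx =>
    (hfree.adj_eq_or_eq_of_adj hcd hbc.symm hbd.symm hab.symm had hac hx).resolve_right
      (by rintro rfl; exact hbd' hx.symm)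
  refine ⟨a, b, c, d, hab, hcd, ?_, ?_, hH.mem_of_forall_adj_mem (S := ↑({a, b, c, d} : Finset W))
    (u := a) (by simp) ?_⟩
  · rintro (rfl | h)
    exacts [hac rfl, hca h]
  · rintro (rfl | h)
    exacts [hbd rfl, hbd' h]
  · simp only [Finset.coe_insert, Finset.coe_singleton, Set.mem_insert_iff,
      Set.mem_singleton_iff]
    rintro x (rfl | rfl | rfl | rfl) y hxy
    · exact Or.inr (Or.inl (hNa y hxy))
    · rcases hNb y hxy with rfl | rfl <;> simp
    · rcases hNc y hxy with rfl | rfl <;> simp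
    · exact Or.inr (Or.inr (Or.inl (hNd y hxy)))

end ExchangeFree

end

/-- If `H` is connected of order at least `4`, then `K₃ □ H` is not well-dominated. -/
theorem stmt_18 {β : Type*} [Fintype β] (H : SimpleGraph β)
    (hH : H.Connected) (hβ : 4 ≤ Fintype.card β) :
    ¬ WellDominated ((⊤ : SimpleGraph (Fin 3)) □ H) := by
  classical
  by_cases hfree : ExchangeFree H
  · obtain ⟨a, b, c, d, hab, hcd, hac, hdb, hV⟩ := hfree.exists_spanning_path_four hH hβ
    exact not_wellDominated_of_forall_mem_four hab hcd hac hdb hV (by simp)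
  · obtain ⟨b, T, hT, hex⟩ : ∃ b T, 3 ≤ T.card ∧ IsExchangeable H b T := by
      simpa [ExchangeFree] using hfree
    exact not_wellDominated_of_isExchangeable hex (by simpa using hT)
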